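/- Let n ≥ 1, let C ⊆ ℝ^{n+1} be a strictly convex sharp convex cone, and let Γ be a subgroup of GL(n+1,ℝ) each of whose elements preserves C. Suppose Γ is virtually nilpotent (Γ contains a nilpotent subgroup of finite index) and nonelliptic: no nontrivial γ ∈ Γ satisfies γ·v = λ·v for some v ∈ C and λ > 0. Then Γ is elementary: there exists a nonzero vector p in the closure of C such that for every γ ∈ Γ there is λ > 0 with γ·p = λ·p. -/

import Mathlib

/-!
Let `z ≠ 1` be central in a finite-index normal nilpotent subgroup `N` of `Γ` (if `N` is trivial,
`Γ` is finite, every element has a fixed point in `C` by averaging an orbit, and `Γ = 1`).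
Then `z` commutes with all its conjugates. By a Perron–Frobenius argument `z` has an eigenray
`ℝ₊p` in `closure C` with positive eigenvalue `μ`. Strict convexity and nonellipticity force the
`μ`-eigenvectors of `z` in `closure C` to form a single ray, so every element commuting with `z`
fixes `ℝ₊p`. Given `g ∈ Γ`, the conjugates `g⁻ⁱ z gⁱ` fix `ℝ₊p`, so `z` fixes each ray `ℝ₊ gⁱ p`;
as `z` has finitely many eigenvalues, two of these rays share one, hence coincide, and `gᵏ`
fixes `ℝ₊p` for some `k ≥ 1`. Finally, if `g` did not fix `ℝ₊p`, strict convexity would put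
`p + c • g p` in `C`, and the weighted orbit sum `∑ i < k, cⁱ • gⁱ p` (with `cᵏ` the inverse of
the eigenvalue of `gᵏ`) would be an eigenvector of `g` in `C`, making `g` elliptic.
-/

open Matrix Polynomial
open scoped Pointwise

/-- `C ⊆ ℝ^{n+1}` is a sharp convex cone: nonempty, open, convex, invariant under
positive scaling, and its closure contains no line through the origin. -/
def IsSharpConvexCone (n : ℕ) (C : Set (Fin (n + 1) → ℝ)) : Prop :=
  C.Nonempty ∧ IsOpen C ∧ Convex ℝ C ∧
    (∀ t : ℝ, 0 < t → t • C = C) ∧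
    closure C ∩ (-(closure C)) = {0}

/-- A sharp convex cone is strictly convex if the sum of any two nonzero frontier
vectors lying on different rays belongs to the open cone (∂Ω contains no segment). -/
def IsStrictlyConvexCone (n : ℕ) (C : Set (Fin (n + 1) → ℝ)) : Prop :=
  IsSharpConvexCone n C ∧
    ∀ x y : Fin (n + 1) → ℝ, x ∈ frontier C → y ∈ frontier C → x ≠ 0 → y ≠ 0 →
      (¬ ∃ t : ℝ, 0 < t ∧ y = t • x) → x + y ∈ C

/-- The matrix `A` preserves the cone `C`. -/
def PreservesCone (n : ℕ) (A : Matrix (Fin (n + 1)) (Fin (n + 1)) ℝ)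
    (C : Set (Fin (n + 1) → ℝ)) : Prop :=
  A.mulVec '' C = C

/-- The multiset of complex eigenvalues (roots of the characteristic polynomial
over `ℂ`, with multiplicity) of a real square matrix. -/
noncomputable def cEigenvalues (n : ℕ) (A : Matrix (Fin (n + 1)) (Fin (n + 1)) ℝ) :
    Multiset ℂ :=
  ((A.charpoly).map (algebraMap ℝ ℂ)).roots

open Set Filter Topology

theorem IsOpen.eventually_add_smul_mem {E : Type*} [AddCommGroup E] [TopologicalSpace E]
    [Module ℝ E] [ContinuousAdd E] [ContinuousSMul ℝ E] {U : Set E} (hU : IsOpen U) {y : E}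
    (hy : y ∈ U) (v : E) : ∀ᶠ δ : ℝ in 𝓝[>] 0, y + δ • v ∈ U := by
  have : Tendsto (fun δ : ℝ => y + δ • v) (𝓝[>] 0) (𝓝 y) := by
    simpa using tendsto_const_nhds.add
      ((tendsto_nhdsWithin_of_tendsto_nhds (tendsto_id (x := 𝓝 (0 : ℝ)))).smul_const v)
  exact this.eventually (hU.mem_nhds hy)

theorem ProperCone.exists_strongDual_norm_le {E : Type*} [NormedAddCommGroup E]
    [NormedSpace ℝ E] [FiniteDimensional ℝ E] (K : ProperCone ℝ E)
    (hK : ∀ x ∈ K, -x ∈ K → x = 0) : ∃ φ : StrongDual ℝ E, ∀ x ∈ K, ‖x‖ ≤ φ x := by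
  set S := (K : Set E) ∩ Metric.sphere 0 1
  have hS : IsCompact S := (isCompact_sphere 0 1).inter_left K.isClosed
  have hsep : ∀ x : S, ∃ f : StrongDual ℝ E, (∀ y ∈ K, 0 ≤ f y) ∧ 0 < f x := by
    rintro ⟨x, hxK, hx1⟩
    have hx0 : x ≠ 0 := ne_zero_of_mem_sphere one_ne_zero ⟨x, hx1⟩
    obtain ⟨f, hfK, hfx⟩ :=
      K.hyperplane_separation_point (x₀ := -x) fun hx => hx0 (hK x hxK hx)
    exact ⟨f, hfK, by simpa using hfx⟩
  choose f hfK hfx using hsep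
  obtain ⟨t, ht⟩ := hS.elim_finite_subcover (fun x => {y | 0 < f x y})
    (fun x => isOpen_lt continuous_const (f x).continuous)
    (fun x hx => mem_iUnion.2 ⟨⟨x, hx⟩, hfx _⟩)
  set ψ := ∑ x ∈ t, f x
  have hψS : ∀ y ∈ S, 0 < ψ y := fun y hy => by
    obtain ⟨x, hx, hxy⟩ := mem_iUnion₂.1 (ht hy)
    simpa [ψ] using Finset.sum_pos' (fun x _ => hfK x y hy.1) ⟨x, hx, hxy⟩
  obtain ⟨m, hm, hmS⟩ := hS.exists_forall_le' ψ.continuous.continuousOn hψS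
  refine ⟨m⁻¹ • ψ, fun x hx => ?_⟩
  rcases eq_or_ne x 0 with rfl | hx0
  · simp
  have hxS : ‖x‖⁻¹ • x ∈ S := ⟨K.smul_mem hx (by positivity), by simp [norm_smul, hx0]⟩
  have := hmS _ hxS
  rw [map_smul, smul_eq_mul, inv_mul_eq_div, le_div_iff₀ (norm_pos_iff.2 hx0)] at this
  change ‖x‖ ≤ m⁻¹ * ψ x
  rw [le_inv_mul_iff₀ hm]
  linarith

theorem Module.End.smul_apply_sum_pow_smul {R M : Type*} [CommSemiring R] [AddCommGroup M]
    [Module R M] (T : Module.End R M) {p : M} {k : ℕ} {c τ : R} (hk : (T ^ k) p = τ • p)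
    (hc : c ^ k * τ = 1) :
    c • T (∑ i ∈ Finset.range k, c ^ i • (T ^ i) p) =
      ∑ i ∈ Finset.range k, c ^ i • (T ^ i) p := by
  set F : ℕ → M := fun i => c ^ i • (T ^ i) p
  have hF : ∀ i, c • T (F i) = F (i + 1) := fun i => by
    simp only [F, map_smul, smul_smul, pow_succ', Module.End.mul_apply]
  have hFk : F k = F 0 := by simp [F, hk, smul_smul, hc]
  rw [map_sum, Finset.smul_sum, Finset.sum_congr rfl fun i _ => hF i]
  have := (Finset.sum_range_succ' F k).symm.trans (Finset.sum_range_succ F k)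
  rwa [hFk, add_left_inj] at this

theorem Group.exists_ne_one_forall_commute_conj {Γ : Type*} [Group Γ] [Infinite Γ]
    (h : ∃ H : Subgroup Γ, Group.IsNilpotent H ∧ H.FiniteIndex) :
    ∃ z : Γ, z ≠ 1 ∧ ∀ g, Commute (g * z * g⁻¹) z := by
  obtain ⟨H, hH, hHf⟩ := h
  set N := H.normalCore
  have hN : N ≠ ⊥ := fun hN => by
    have : Finite Γ := Nat.finite_of_card_ne_zero <| by
      simpa [N, hN] using (Subgroup.finiteIndex_normalCore H).index_ne_zero
    exact not_finite Γ
  have : Nontrivial N := (Subgroup.nontrivial_iff_ne_bot N).2 hN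
  have : Group.IsNilpotent N :=
    nilpotent_of_mulEquiv (Subgroup.subgroupOfEquivOfLe H.normalCore_le)
  obtain ⟨⟨z, hz⟩, hz1⟩ :=
    Subgroup.ne_bot_iff_exists_ne_one.1 (Group.IsNilpotent.center_ne_bot (G := N))
  refine ⟨z, fun h1 => hz1 (Subtype.ext (Subtype.ext h1)), fun g => ?_⟩
  have hgz : g * z * g⁻¹ ∈ N := H.normalCore_normal.conj_mem z z.2 g
  exact congrArg Subtype.val (Subgroup.mem_center_iff.1 hz ⟨_, hgz⟩)

namespace IsSharpConvexCone

variable {n : ℕ} {C : Set (Fin (n + 1) → ℝ)}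

theorem smul_mem (h : IsSharpConvexCone n C) {t : ℝ} (ht : 0 < t) {x : Fin (n + 1) → ℝ}
    (hx : x ∈ C) : t • x ∈ C := by
  rw [← h.2.2.2.1 t ht]
  exact smul_mem_smul_set hx

theorem add_mem_of_mem_closure (h : IsSharpConvexCone n C) {x y : Fin (n + 1) → ℝ}
    (hx : x ∈ C) (hy : y ∈ closure C) : x + y ∈ C := by
  have hmid : (1 / 2 : ℝ) • x + (1 / 2 : ℝ) • y ∈ C := by
    simpa [h.2.1.interior_eq] using h.2.2.1.combo_interior_closure_mem_interior
      (by rwa [h.2.1.interior_eq]) hy (by norm_num) (by norm_num) (by norm_num)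
  simpa [smul_add, smul_smul] using h.smul_mem two_pos hmid

def toConvexCone (h : IsSharpConvexCone n C) : ConvexCone ℝ (Fin (n + 1) → ℝ) where
  carrier := C
  smul_mem' _ ht _ hx := h.smul_mem ht hx
  add_mem' _ hx _ hy := h.add_mem_of_mem_closure hx (subset_closure hy)

theorem zero_mem_closure (h : IsSharpConvexCone n C) :
    (0 : Fin (n + 1) → ℝ) ∈ closure C := by
  obtain ⟨v, hv⟩ := h.1
  have : Tendsto (fun t : ℝ => t • v) (𝓝[>] 0) (𝓝 0) := by
    simpa using (tendsto_nhdsWithin_of_tendsto_nhds (tendsto_id (x := 𝓝 (0 : ℝ)))).smul_const v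
  exact mem_closure_of_tendsto this (eventually_nhdsWithin_of_forall fun t ht => h.smul_mem ht hv)

def closureCone (h : IsSharpConvexCone n C) : ProperCone ℝ (Fin (n + 1) → ℝ) :=
  ⟨h.toConvexCone.closure.toPointedCone h.zero_mem_closure, isClosed_closure⟩

theorem exists_strongDual_norm_le (h : IsSharpConvexCone n C) :
    ∃ φ : StrongDual ℝ (Fin (n + 1) → ℝ), ∀ x ∈ closure C, ‖x‖ ≤ φ x := by
  refine h.closureCone.exists_strongDual_norm_le fun x hx hnx => ?_
  have : x ∈ closure C ∩ -closure C := ⟨hx, hnx⟩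
  rwa [h.2.2.2.2] at this

theorem zero_notMem (h : IsSharpConvexCone n C) : (0 : Fin (n + 1) → ℝ) ∉ C := by
  intro h0
  obtain ⟨v, hv⟩ := exists_ne (0 : Fin (n + 1) → ℝ)
  obtain ⟨t, ⟨hvC, hnvC⟩, ht⟩ := (((h.2.1.eventually_add_smul_mem h0 v).and
    (h.2.1.eventually_add_smul_mem h0 (-v))).and self_mem_nhdsWithin).exists
  have : t • v ∈ closure C ∩ -closure C :=
    ⟨subset_closure (by simpa using hvC), subset_closure (by simpa using hnvC)⟩
  rw [h.2.2.2.2] at this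
  exact smul_ne_zero (ne_of_gt ht) hv this

theorem exists_bound_of_sub_smul_mem_closure (h : IsSharpConvexCone n C)
    (B : Module.End ℝ (Fin (n + 1) → ℝ)) :
    ∃ M, ∀ x ∈ closure C, ‖x‖ = 1 → ∀ l : ℝ, B x - l • x ∈ closure C → l ≤ M := by
  obtain ⟨φ, hφ⟩ := h.exists_strongDual_norm_le
  obtain ⟨M, hM⟩ := (isCompact_sphere (0 : Fin (n + 1) → ℝ) 1).exists_bound_of_continuousOn
    (φ.continuous.comp B.continuous_of_finiteDimensional).continuousOn
  refine ⟨M, fun x hx hx1 l hl => ?_⟩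
  have hBx : |φ (B x)| ≤ M := hM x (by simpa using hx1)
  have hφx : 1 ≤ φ x := hx1 ▸ hφ x hx
  have hφl : 0 ≤ φ (B x) - l * φ x := by simpa using (norm_nonneg _).trans (hφ _ hl)
  rcases le_or_gt l 0 with hl0 | hl0
  · exact hl0.trans ((abs_nonneg _).trans hBx)
  · nlinarith [le_abs_self (φ (B x))]

/- Maximise `l` over the compact set of pairs `(l, x)` with `B x - l • x ∈ closure C`: at a
maximiser, a nonzero `B x - r • x` would be pushed by `B` into the open cone `C`, leaving room
for a larger `l` at the point `B x`. -/
theorem exists_eigenvector_ge_of_apply_mem (h : IsSharpConvexCone n C)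
    (B : Module.End ℝ (Fin (n + 1) → ℝ)) (hB : ∀ x ∈ closure C, x ≠ 0 → B x ∈ C)
    {x₀ : Fin (n + 1) → ℝ} (hx₀ : x₀ ∈ closure C) (hx₀1 : ‖x₀‖ = 1) {c : ℝ}
    (hc : B x₀ - c • x₀ ∈ closure C) :
    ∃ x ∈ closure C, ‖x‖ = 1 ∧ ∃ r : ℝ, c ≤ r ∧ B x = r • x := by
  obtain ⟨M, hM⟩ := h.exists_bound_of_sub_smul_mem_closure B
  set P : Set (ℝ × (Fin (n + 1) → ℝ)) := (Icc c M ×ˢ (closure C ∩ Metric.sphere 0 1)) ∩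
    (fun q => B q.2 - q.1 • q.2) ⁻¹' closure C
  have hP : IsCompact P := by
    have := B.continuous_of_finiteDimensional
    exact (isCompact_Icc.prod ((isCompact_sphere 0 1).inter_left isClosed_closure)).inter_right
      (isClosed_closure.preimage (by fun_prop))
  have hmemP : ∀ x ∈ closure C, ‖x‖ = 1 → ∀ l, c ≤ l → B x - l • x ∈ closure C →
      (l, x) ∈ P :=
    fun x hx hx1 l hcl hl => ⟨⟨⟨hcl, hM x hx hx1 l hl⟩, hx, by simpa using hx1⟩, hl⟩
  obtain ⟨⟨r, x⟩, ⟨⟨⟨hcr, -⟩, hx, hx1⟩, hy⟩, hmax⟩ :=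
    hP.exists_isMaxOn ⟨_, hmemP x₀ hx₀ hx₀1 c le_rfl hc⟩ continuous_fst.continuousOn
  rw [mem_sphere_zero_iff_norm] at hx1
  refine ⟨x, hx, hx1, r, hcr, ?_⟩
  by_contra hne
  have hx0 : x ≠ 0 := by rintro rfl; simp at hx1
  have hBy : B (B x - r • x) ∈ C := hB _ hy (sub_ne_zero.2 hne)
  obtain ⟨δ, hδC, hδ⟩ :=
    ((h.2.1.eventually_add_smul_mem hBy (-B x)).and self_mem_nhdsWithin).exists
  have hBx : B x ∈ C := hB x hx hx0
  have hBx0 : 0 < ‖B x‖ := norm_pos_iff.2 (ne_of_mem_of_not_mem hBx h.zero_notMem)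
  set x' := ‖B x‖⁻¹ • B x
  have hx' : x' ∈ closure C := subset_closure (h.smul_mem (by positivity) hBx)
  have hsub : B x' - (r + δ) • x' ∈ closure C := by
    have : B x' - (r + δ) • x' = ‖B x‖⁻¹ • (B (B x - r • x) + δ • -B x) := by
      simp only [x', map_smul, map_sub]
      module
    rw [this]
    exact subset_closure (h.smul_mem (by positivity) hδC)
  have := hmax (hmemP x' hx' (norm_smul_inv_norm (norm_pos_iff.1 hBx0)) _ (by linarith) hsub)
  simp only [mem_ofPred_eq] at this
  linarith

/- The perturbations `B ε = f + ε • φ(·) v₁` map `closure C \ {0}` into `C`. Their eigenpairs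
`(ε, r, x)` with `ε ∈ [0, 1]` form a compact set whose projection to `ε` contains `(0, 1]`,
hence also `0`. -/
theorem exists_eigenvector_of_mapsTo (h : IsSharpConvexCone n C)
    (f : Module.End ℝ (Fin (n + 1) → ℝ)) (hf : MapsTo f C C) :
    ∃ p ∈ closure C, p ≠ 0 ∧ ∃ r : ℝ, 0 < r ∧ f p = r • p := by
  obtain ⟨v, hv⟩ := h.1
  have hv0 : v ≠ 0 := ne_of_mem_of_not_mem hv h.zero_notMem
  set v₁ := ‖v‖⁻¹ • v
  have hv₁ : v₁ ∈ C := h.smul_mem (by positivity) hv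
  obtain ⟨c, hcC, hc⟩ :=
    ((h.2.1.eventually_add_smul_mem (hf hv₁) (-v₁)).and self_mem_nhdsWithin).exists
  obtain ⟨φ, hφ⟩ := h.exists_strongDual_norm_le
  have hφpos : ∀ x ∈ closure C, x ≠ 0 → 0 < φ x := fun x hx hx0 =>
    (norm_pos_iff.2 hx0).trans_le (hφ x hx)
  have hf' : MapsTo f (closure C) (closure C) := hf.closure f.continuous_of_finiteDimensional
  set B : ℝ → Module.End ℝ (Fin (n + 1) → ℝ) :=
    fun ε => f + ε • (φ : (Fin (n + 1) → ℝ) →ₗ[ℝ] ℝ).smulRight v₁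
  have hB : ∀ ε x, B ε x = f x + (ε * φ x) • v₁ := fun ε x => by simp [B, smul_smul]
  have hBpos : ∀ ε > 0, ∀ x ∈ closure C, x ≠ 0 → B ε x ∈ C := fun ε hε x hx hx0 => by
    rw [hB, add_comm (f x)]
    exact h.add_mem_of_mem_closure (h.smul_mem (mul_pos hε (hφpos x hx hx0)) hv₁) (hf' hx)
  obtain ⟨M, hM⟩ := h.exists_bound_of_sub_smul_mem_closure (B 1)
  set Z : Set (ℝ × ℝ × (Fin (n + 1) → ℝ)) :=
    (Icc 0 1 ×ˢ Icc c M ×ˢ (closure C ∩ Metric.sphere 0 1)) ∩ {q | B q.1 q.2.2 = q.2.1 • q.2.2}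
  have hZ : IsCompact Z := by
    have := f.continuous_of_finiteDimensional
    refine (isCompact_Icc.prod (isCompact_Icc.prod
      ((isCompact_sphere 0 1).inter_left isClosed_closure))).inter_right (isClosed_eq ?_ ?_)
    · simp only [hB]
      fun_prop
    · fun_prop
  have hsub : Ioc 0 1 ⊆ Prod.fst '' Z := by
    rintro ε ⟨hε0, hε1⟩
    have hcε : B ε v₁ - c • v₁ ∈ closure C := by
      rw [hB, add_sub_right_comm, sub_eq_add_neg, ← smul_neg]
      exact subset_closure (h.add_mem_of_mem_closure hcC <| subset_closure <|
        h.smul_mem (mul_pos hε0 (hφpos v₁ (subset_closure hv₁) (by positivity))) hv₁)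
    obtain ⟨x, hx, hx1, r, hcr, hBx⟩ := h.exists_eigenvector_ge_of_apply_mem (B ε)
      (hBpos ε hε0) (subset_closure hv₁) (norm_smul_inv_norm hv0) hcε
    have hB1 : B 1 x - r • x = ((1 - ε) * φ x) • v₁ := by
      rw [← hBx, hB, hB]
      module
    refine ⟨(ε, r, x),
      ⟨⟨⟨hε0.le, hε1⟩, ⟨hcr, hM x hx hx1 r ?_⟩, hx, by simpa using hx1⟩, hBx⟩, rfl⟩
    rw [hB1]
    exact h.closureCone.smul_mem (subset_closure hv₁)
      (mul_nonneg (by linarith) ((norm_nonneg x).trans (hφ x hx)))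
  have h0 : (0 : ℝ) ∈ Prod.fst '' Z :=
    (hZ.image continuous_fst).isClosed.closure_subset_iff.2 hsub (by simp [closure_Ioc])
  obtain ⟨⟨_, r, x⟩, ⟨⟨-, ⟨hcr, -⟩, hx, hx1⟩, hBx⟩, rfl⟩ := h0
  refine ⟨x, hx, ne_zero_of_mem_sphere one_ne_zero ⟨x, hx1⟩, r, hc.trans_le hcr, ?_⟩
  simpa [hB] using hBx

theorem exists_fixed_mem_of_pow_eq_one (h : IsSharpConvexCone n C)
    {T : Module.End ℝ (Fin (n + 1) → ℝ)} (hT : MapsTo T C C) {k : ℕ} (hk : 0 < k)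
    (hTk : T ^ k = 1) : ∃ v ∈ C, T v = v := by
  obtain ⟨v, hv⟩ := h.1
  obtain ⟨m, rfl⟩ := Nat.exists_eq_add_one.2 hk
  have hTi : ∀ i, (T ^ i) v ∈ C := fun i => by
    rw [Module.End.pow_apply]
    exact hT.iterate i hv
  refine ⟨∑ i ∈ Finset.range (m + 1), (T ^ i) v, ?_, ?_⟩
  · rw [Finset.sum_range_succ', pow_zero, Module.End.one_apply, add_comm (Finset.sum _ _)]
    exact h.add_mem_of_mem_closure hv (h.closureCone.sum_mem fun i _ => subset_closure (hTi _))
  · simpa using T.smul_apply_sum_pow_smul (c := 1) (τ := 1) (by simp [hTk]) (by simp)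

end IsSharpConvexCone

namespace IsStrictlyConvexCone

variable {n : ℕ} {C : Set (Fin (n + 1) → ℝ)}

theorem add_mem_of_notMem (hC : IsStrictlyConvexCone n C) {x y : Fin (n + 1) → ℝ}
    (hx : x ∈ closure C) (hxC : x ∉ C) (hx0 : x ≠ 0) (hy : y ∈ closure C) (hyC : y ∉ C)
    (hy0 : y ≠ 0) (hxy : ¬ ∃ t : ℝ, 0 < t ∧ y = t • x) : x + y ∈ C := by
  have hfr : frontier C = closure C \ C := hC.1.2.1.frontier_eq
  exact hC.2 x y (hfr ▸ ⟨hx, hxC⟩) (hfr ▸ ⟨hy, hyC⟩) hx0 hy0 hxy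

theorem exists_pos_smul_eq_of_apply_eq (hC : IsStrictlyConvexCone n C)
    {T : Module.End ℝ (Fin (n + 1) → ℝ)} {l : ℝ} (hT : ∀ v ∈ C, T v ≠ l • v)
    {p q : Fin (n + 1) → ℝ} (hp : p ∈ closure C) (hp0 : p ≠ 0) (hq : q ∈ closure C)
    (hq0 : q ≠ 0) (hTp : T p = l • p) (hTq : T q = l • q) : ∃ t : ℝ, 0 < t ∧ q = t • p := by
  by_contra hpq
  exact hT _ (hC.add_mem_of_notMem hp (fun hpC => hT p hpC hTp) hp0 hq
    (fun hqC => hT q hqC hTq) hq0 hpq) (by rw [map_add, hTp, hTq, smul_add])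

theorem exists_eigenvector_mem_of_pow_apply_eq (hC : IsStrictlyConvexCone n C)
    {T : Module.End ℝ (Fin (n + 1) → ℝ)} (hT : MapsTo T (closure C) (closure C))
    {p : Fin (n + 1) → ℝ} (hp : p ∈ closure C) (hpC : p ∉ C) (hTpC : T p ∉ C) (hp0 : p ≠ 0)
    {k : ℕ} (hk : 0 < k) {τ : ℝ} (hτ : 0 < τ) (hTk : (T ^ k) p = τ • p)
    (hray : ¬ ∃ t : ℝ, 0 < t ∧ T p = t • p) : ∃ v ∈ C, ∃ l : ℝ, 0 < l ∧ T v = l • v := by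
  have h := hC.1
  obtain _ | _ | m := k
  · exact absurd hk (lt_irrefl 0)
  · exact absurd ⟨τ, hτ, by simpa using hTk⟩ hray
  have hTp0 : T p ≠ 0 := fun h0 => smul_ne_zero hτ.ne' hp0 <| by
    rw [← hTk, pow_succ, Module.End.mul_apply, h0, map_zero]
  -- `c` rescales `T` so that `p` becomes periodic: `(c • T) ^ (m + 2) p = p`.
  set c : ℝ := τ⁻¹ ^ ((m + 2 : ℕ) : ℝ)⁻¹
  have hc : 0 < c := by positivity
  have hcτ : c ^ (m + 2) * τ = 1 := by
    rw [Real.rpow_inv_natCast_pow (by positivity) (by omega), inv_mul_cancel₀ hτ.ne']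
  have hpair : p + c • T p ∈ C := by
    refine hC.add_mem_of_notMem hp hpC hp0 (h.closureCone.smul_mem (hT hp) hc.le)
      (fun hcT => hTpC ?_) (smul_ne_zero hc.ne' hTp0)
      fun ⟨t, ht, hcTp⟩ => hray ⟨c⁻¹ * t, by positivity, ?_⟩
    · simpa [smul_smul, hc.ne'] using h.smul_mem (inv_pos.2 hc) hcT
    · rw [mul_smul, ← hcTp, inv_smul_smul₀ hc.ne']
  set F : ℕ → Fin (n + 1) → ℝ := fun i => c ^ i • (T ^ i) p
  have hsum : ∑ i ∈ Finset.range (m + 2), F i ∈ C := by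
    rw [Finset.sum_range_succ', Finset.sum_range_succ', add_assoc, add_comm (Finset.sum _ _)]
    refine h.add_mem_of_mem_closure (by simpa [F, add_comm] using hpair)
      (h.closureCone.sum_mem fun i _ => h.closureCone.smul_mem ?_ (by positivity))
    rw [Module.End.pow_apply]
    exact hT.iterate _ hp
  refine ⟨_, hsum, c⁻¹, inv_pos.2 hc, ?_⟩
  rw [eq_inv_smul_iff₀ hc.ne']
  exact T.smul_apply_sum_pow_smul hTk hcτ

end IsStrictlyConvexCone

section LinearAction

variable {n : ℕ} {C : Set (Fin (n + 1) → ℝ)} {Γ : Type*} [Group Γ]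

theorem IsStrictlyConvexCone.exists_pow_apply_eq_smul (hC : IsStrictlyConvexCone n C)
    (ρ : Γ →* Module.End ℝ (Fin (n + 1) → ℝ)) (hρ : ∀ g, MapsTo (ρ g) C C)
    (hnonell : ∀ g, ∀ v ∈ C, ∀ l : ℝ, 0 < l → ρ g v = l • v → g = 1)
    {z : Γ} (hz1 : z ≠ 1) (hz : ∀ g, Commute (g * z * g⁻¹) z)
    {p : Fin (n + 1) → ℝ} (hp : p ∈ closure C) (hp0 : p ≠ 0) {μ : ℝ} (hμ : 0 < μ)
    (hzp : ρ z p = μ • p) (g : Γ) : ∃ k, 0 < k ∧ ∃ τ : ℝ, 0 < τ ∧ ρ (g ^ k) p = τ • p := by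
  have hcl : ∀ g, MapsTo (ρ g) (closure C) (closure C) := fun g =>
    (hρ g).closure (ρ g).continuous_of_finiteDimensional
  have hinj : ∀ g, Function.Injective (ρ g) := fun g =>
    ((Module.End.isUnit_iff _).1 ((Group.isUnit g).map ρ)).injective
  have hne : ∀ g q, q ≠ 0 → ρ g q ≠ 0 := fun g _ hq => (map_ne_zero_iff _ (hinj g)).2 hq
  have hray : ∀ {l : ℝ} {q q' : Fin (n + 1) → ℝ}, 0 < l → q ∈ closure C → q ≠ 0 →
      q' ∈ closure C → q' ≠ 0 → ρ z q = l • q → ρ z q' = l • q' → ∃ t : ℝ, 0 < t ∧ q' = t • q :=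
    fun {l _ _} hl => hC.exists_pos_smul_eq_of_apply_eq fun v hv hzv =>
      hz1 (hnonell z v hv l hl hzv)
  have heig : ∀ i : ℕ, ∃ t : ℝ, 0 < t ∧ ρ z (ρ (g ^ i) p) = t • ρ (g ^ i) p := fun i => by
    set w := (g ^ i)⁻¹ * z * g ^ i
    have hw : Commute w z := by simpa [w] using hz (g ^ i)⁻¹
    obtain ⟨t, ht, hwp⟩ := hray hμ hp hp0 (hcl w hp) (hne w p hp0) hzp <| by
      rw [← Module.End.mul_apply, ← map_mul, ← hw.eq, map_mul, Module.End.mul_apply, hzp,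
        map_smul]
    refine ⟨t, ht, ?_⟩
    have hzw : z * g ^ i = g ^ i * w := by simp only [w, ← mul_assoc, mul_inv_cancel, one_mul]
    rw [← Module.End.mul_apply, ← map_mul, hzw, map_mul, Module.End.mul_apply, hwp, map_smul]
  choose t ht hzt using heig
  have hfin : Finite {l | Module.End.HasEigenvalue (ρ z) l} :=
    (Module.End.finite_hasEigenvalue (ρ z)).to_subtype
  obtain ⟨i, j, hij, htij⟩ := Finite.exists_ne_map_eq_of_infinite
    (fun i => (⟨t i, Module.End.hasEigenvalue_of_hasEigenvector
      ⟨Module.End.mem_eigenspace_iff.2 (hzt i), hne _ p hp0⟩⟩ :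
      {l | Module.End.HasEigenvalue (ρ z) l}))
  wlog hlt : i < j generalizing i j
  · exact this j i hij.symm htij.symm (hij.lt_or_gt.resolve_left hlt)
  have htij' : t i = t j := congrArg Subtype.val htij
  obtain ⟨s, hs, hsij⟩ := hray (ht i) (hcl (g ^ i) hp) (hne _ p hp0) (hcl (g ^ j) hp)
    (hne _ p hp0) (hzt i) (htij' ▸ hzt j)
  refine ⟨j - i, by omega, s, hs, hinj (g ^ i) ?_⟩
  rwa [← Module.End.mul_apply, ← map_mul, pow_mul_pow_sub g hlt.le, map_smul]

theorem IsStrictlyConvexCone.exists_common_eigenray (hC : IsStrictlyConvexCone n C)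
    (ρ : Γ →* Module.End ℝ (Fin (n + 1) → ℝ)) (hρ : ∀ g, MapsTo (ρ g) C C)
    (hnonell : ∀ g, ∀ v ∈ C, ∀ l : ℝ, 0 < l → ρ g v = l • v → g = 1)
    (hvn : ∃ H : Subgroup Γ, Group.IsNilpotent H ∧ H.FiniteIndex) :
    ∃ p ∈ closure C, p ≠ 0 ∧ ∀ g, ∃ l : ℝ, 0 < l ∧ ρ g p = l • p := by
  rcases finite_or_infinite Γ with hfin | hinf
  · have htriv : ∀ g : Γ, g = 1 := fun g => by
      obtain ⟨v, hv, hgv⟩ := hC.1.exists_fixed_mem_of_pow_eq_one (hρ g) (orderOf_pos g)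
        (by rw [← map_pow, pow_orderOf_eq_one, map_one])
      exact hnonell g v hv 1 one_pos (by rw [hgv, one_smul])
    obtain ⟨v, hv⟩ := hC.1.1
    exact ⟨v, subset_closure hv, ne_of_mem_of_not_mem hv hC.1.zero_notMem,
      fun g => ⟨1, one_pos, by rw [htriv g, map_one, Module.End.one_apply, one_smul]⟩⟩
  obtain ⟨z, hz1, hz⟩ := Group.exists_ne_one_forall_commute_conj hvn
  obtain ⟨p, hp, hp0, μ, hμ, hzp⟩ := hC.1.exists_eigenvector_of_mapsTo (ρ z) (hρ z)
  have hpC : ∀ g, ρ g p ∉ C := fun g hgp => hz1 <| hnonell z p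
    (by simpa [← Module.End.mul_apply, ← map_mul] using hρ g⁻¹ hgp) μ hμ hzp
  refine ⟨p, hp, hp0, fun g => ?_⟩
  obtain ⟨k, hk, τ, hτ, hgk⟩ :=
    hC.exists_pow_apply_eq_smul ρ hρ hnonell hz1 hz hp hp0 hμ hzp g
  by_contra hray
  obtain ⟨v, hv, l, hl, hgv⟩ := hC.exists_eigenvector_mem_of_pow_apply_eq
    ((hρ g).closure (ρ g).continuous_of_finiteDimensional) hp (by simpa using hpC 1) (hpC g)
    hp0 hk hτ (by rwa [← map_pow]) hray
  exact hray ⟨1, one_pos, by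
    rw [hnonell g v hv l hl hgv, map_one, Module.End.one_apply, one_smul]⟩

end LinearAction

theorem virtually_nilpotent_nonelliptic_is_elementary_general
    (n : ℕ) (C : Set (Fin (n + 1) → ℝ)) (hC : IsStrictlyConvexCone n C)
    (G : Subgroup (GL (Fin (n + 1)) ℝ))
    (hpres : ∀ g ∈ G, PreservesCone n (↑g) C)
    (hvn : ∃ H : Subgroup ↥G, Group.IsNilpotent ↥H ∧ H.FiniteIndex)
    (hnonell : ∀ g ∈ G, g ≠ 1 →
      ¬ ∃ v ∈ C, ∃ l : ℝ, 0 < l ∧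
        (g : Matrix (Fin (n + 1)) (Fin (n + 1)) ℝ).mulVec v = l • v) :
    ∃ p : Fin (n + 1) → ℝ, p ∈ closure C ∧ p ≠ 0 ∧
      ∀ g ∈ G, ∃ l : ℝ, 0 < l ∧
        (g : Matrix (Fin (n + 1)) (Fin (n + 1)) ℝ).mulVec p = l • p := by
  let ρ : G →* Module.End ℝ (Fin (n + 1) → ℝ) :=
    (Matrix.toLinAlgEquiv' : Matrix (Fin (n + 1)) (Fin (n + 1)) ℝ ≃ₐ[ℝ] _).toMonoidHom.comp
      ((Units.coeHom _).comp G.subtype)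
  obtain ⟨p, hp, hp0, hpG⟩ := hC.exists_common_eigenray ρ
    (fun g v hv => (show _ '' C = C from hpres g.1 g.2).subset (mem_image_of_mem _ hv))
    (fun g v hv l hl hgv => Subtype.ext <| by_contra fun hg1 =>
      hnonell g.1 g.2 hg1 ⟨v, hv, l, hl, hgv⟩)
    hvn
  exact ⟨p, hp, hp0, fun g hg => hpG ⟨g, hg⟩⟩

/-- A virtually nilpotent, nonelliptic group of automorphisms of a strictly convex cone
is elementary: it fixes a common ray in the closure of the cone. -/
theorem virtually_nilpotent_nonelliptic_is_elementary
    (n : ℕ) (hn : 1 ≤ n) (C : Set (Fin (n + 1) → ℝ)) (hC : IsStrictlyConvexCone n C)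
    (G : Subgroup (GL (Fin (n + 1)) ℝ))
    (hpres : ∀ g ∈ G, PreservesCone n (↑g) C)
    (hvn : ∃ H : Subgroup ↥G, Group.IsNilpotent ↥H ∧ H.FiniteIndex)
    (hnonell : ∀ g ∈ G, g ≠ 1 →
      ¬ ∃ v ∈ C, ∃ l : ℝ, 0 < l ∧
        (g : Matrix (Fin (n + 1)) (Fin (n + 1)) ℝ).mulVec v = l • v) :
    ∃ p : Fin (n + 1) → ℝ, p ∈ closure C ∧ p ≠ 0 ∧
      ∀ g ∈ G, ∃ l : ℝ, 0 < l ∧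
        (g : Matrix (Fin (n + 1)) (Fin (n + 1)) ℝ).mulVec p = l • p :=
  virtually_nilpotent_nonelliptic_is_elementary_general n C hC G hpres hvn hnonell
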